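/- arXiv:2204.01445 — 2 statements merged into one kernel-verified Lean document; each statement's English description precedes it below -/
import Mathlib

section
/- (G^1, •) is a (noncommutative) group with unit the constant series 1: for every f ∈ G^1 there exists a unique f^{•−1} ∈ G^1 with f^{•−1} • f = 1 = f • f^{•−1}. -/
/-- Words over the alphabet of positive integers. -/
abbrev Word : Type := List ℕ+

variable {A : Type*}

/-- The constant series `1`: coefficient `1` on the empty word, `0` elsewhere. -/
def one [CommRing A] : Word → A := fun w => if w = [] then 1 else 0

/-- Cauchy product of noncommutative series:
`(f·g)(w) = Σ f(u) g(v)` over all factorizations `w = u ++ v`. -/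
def cauchy [CommRing A] (f g : Word → A) : Word → A := fun w =>
  ∑ k ∈ Finset.range (w.length + 1), f (w.take k) * g (w.drop k)

/-- The subword of `w` consisting of the letters at positions in `S` (in increasing order). -/
def subword (w : Word) (S : Finset ℕ) : Word :=
  (((List.range w.length).zip w).filter (fun p => decide (p.1 ∈ S))).map Prod.snd

/-- The (possibly empty) factor of `w` occupying the positions strictly between `s` and the
next element of `S` after `s` (or the end of the word if there is no such element). -/
def gapAfter (w : Word) (S : Finset ℕ) (s : ℕ) : Word :=
  (((List.range w.length).zip w).filter (fun p => decide (s < p.1 ∧ ∀ j ∈ S, j ≤ s ∨ p.1 < j))).map Prod.snd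

/-- Shifted substitution `f(xg(x))`: its constant coefficient is `f(∅)`, and its coefficient
on a nonempty word `w = a_1⋯a_n` is the sum, over subsets `S = {s_1<⋯<s_k}` of the positions
of `w` containing the first position, of `f(a_{s_1}⋯a_{s_k})·g(w_{(s_1,s_2)})⋯g(w_{(s_k,n+1)})`,
where `w_{(s_j,s_{j+1})}` is the factor of `w` strictly between positions `s_j` and `s_{j+1}`. -/
def subst [CommRing A] (f g : Word → A) : Word → A := fun w =>
  if w = [] then f []
  else ∑ S ∈ (Finset.range w.length).powerset.filter (fun S => 0 ∈ S),
    f (subword w S) * ∏ s ∈ S, g (gapAfter w S s)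

/-- Shifted composition `f • g := g · f(xg(x))`. -/
def bullet [CommRing A] (f g : Word → A) : Word → A := cauchy g (subst f g)

/-!
Splitting off the first gap of the chosen positions gives the recursion
`f(xg(x)) = f(∅) + Σₐ xₐ · g · (∂ₐf)(xg(x))`, where `∂ₐf = leftQuot a f` is `u ↦ f(au)`.
By induction on the length of words it makes `f ↦ f(xg(x))` multiplicative for the Cauchy
product and gives `(f(xp(x)))(xq(x)) = f(x(p • q)(x))`; together these are the associativity of
`•`, for which `1` is a right unit. Solving `(f • g)(w) = 0` for `g(w)` by recursion on the length
of `w` gives a right inverse, and a monoid in which every element has a right inverse is a group.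
-/

namespace List

variable {α : Type*}

def filterPos : (ℕ → Bool) → List α → List α
  | _, [] => []
  | q, a :: l => (if q 0 then [a] else []) ++ filterPos (fun i => q (i + 1)) l

theorem filterPos_cons (q : ℕ → Bool) (a : α) (l : List α) :
    filterPos q (a :: l) = (if q 0 then [a] else []) ++ filterPos (fun i => q (i + 1)) l := rfl

theorem map_snd_filter_zip_range' (q : ℕ → Bool) (l : List α) (m : ℕ) :
    (((range' m l.length).zip l).filter (fun p => q p.1)).map Prod.snd =
      filterPos (fun i => q (i + m)) l := by
  induction l generalizing m with
  | nil => rfl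
  | cons a l ih =>
    rw [length_cons, range'_succ, zip_cons_cons, filter_cons, filterPos_cons, Nat.zero_add]
    simp only [Nat.add_right_comm _ 1 m, Nat.add_assoc]
    split <;> simp [ih]

theorem filterPos_eq_nil {q : ℕ → Bool} (h : ∀ i, q i = false) (l : List α) :
    filterPos q l = [] := by
  induction l generalizing q with
  | nil => rfl
  | cons a l ih => simp [filterPos_cons, h 0, ih fun i => h (i + 1)]

theorem filterPos_eq_self {q : ℕ → Bool} (h : ∀ i, q i = true) (l : List α) :
    filterPos q l = l := by
  induction l generalizing q with
  | nil => rfl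
  | cons a l ih => simp [filterPos_cons, h 0, ih fun i => h (i + 1)]

theorem filterPos_lt (k : ℕ) (l : List α) : filterPos (fun i => decide (i < k)) l = l.take k := by
  induction l generalizing k with
  | nil => exact take_nil.symm
  | cons a l ih =>
    cases k with
    | zero => simp [filterPos_eq_nil]
    | succ k => simp [filterPos_cons, ← ih k]

theorem filterPos_eq_filterPos_drop {q : ℕ → Bool} {k : ℕ} (h : ∀ i < k, q i = false)
    (l : List α) : filterPos q l = filterPos (fun i => q (i + k)) (l.drop k) := by
  induction k generalizing q l with
  | zero => rfl
  | succ k ih =>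
    cases l with
    | nil => rfl
    | cons a l =>
      rw [filterPos_cons, h 0 k.succ_pos, ih (fun i hi => h (i + 1) (by omega)) l]
      simp only [Nat.add_assoc, Bool.false_eq_true, if_false, nil_append, drop_succ_cons]

theorem length_filterPos_le (q : ℕ → Bool) (l : List α) : (filterPos q l).length ≤ l.length := by
  induction l generalizing q with
  | nil => rfl
  | cons a l ih =>
    rw [filterPos_cons, length_append, length_cons]
    have := ih fun i => q (i + 1)
    split <;> simp <;> omega

end List

open Finset

theorem subword_eq_filterPos (w : Word) (S : Finset ℕ) :
    subword w S = w.filterPos (fun i => decide (i ∈ S)) := by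
  rw [subword, List.range_eq_range']
  exact List.map_snd_filter_zip_range' (fun i => decide (i ∈ S)) w 0

theorem gapAfter_eq_filterPos (w : Word) (S : Finset ℕ) (s : ℕ) :
    gapAfter w S s = w.filterPos (fun i => decide (s < i ∧ ∀ j ∈ S, j ≤ s ∨ i < j)) := by
  rw [gapAfter, List.range_eq_range']
  exact List.map_snd_filter_zip_range' (fun i => decide (s < i ∧ ∀ j ∈ S, j ≤ s ∨ i < j)) w 0

theorem length_gapAfter_lt {w : Word} (hw : w ≠ []) (S : Finset ℕ) (s : ℕ) :
    (gapAfter w S s).length < w.length := by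
  obtain ⟨a, v, rfl⟩ := List.exists_cons_of_ne_nil hw
  rw [gapAfter_eq_filterPos, List.filterPos_cons, if_neg (by simp), List.nil_append,
    List.length_cons]
  exact Nat.lt_succ_of_le (List.length_filterPos_le _ v)

theorem subword_cons_singleton_zero (a : ℕ+) (v : Word) : subword (a :: v) {0} = [a] := by
  rw [subword_eq_filterPos, List.filterPos_cons, if_pos (by simp), List.filterPos_eq_nil (by simp)]
  rfl

theorem gapAfter_cons_singleton_zero (a : ℕ+) (v : Word) : gapAfter (a :: v) {0} 0 = v := by
  rw [gapAfter_eq_filterPos, List.filterPos_cons, if_neg (by simp), List.nil_append]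
  exact List.filterPos_eq_self (by simp) v

def subsetsWithZero (n : ℕ) : Finset (Finset ℕ) := (range n).powerset.filter (fun S => 0 ∈ S)

theorem mem_subsetsWithZero {n : ℕ} {S : Finset ℕ} :
    S ∈ subsetsWithZero n ↔ S ⊆ range n ∧ 0 ∈ S := by
  rw [subsetsWithZero, mem_filter, mem_powerset]

/-- The set of positions `{0} ∪ (S' + (k + 1))`: its first gap has length `k`, and after that
gap it continues as `S'`. -/
def prependGap (k : ℕ) (S' : Finset ℕ) : Finset ℕ := insert 0 (S'.image (· + (k + 1)))

section PrependGap

variable {k : ℕ} {S' : Finset ℕ}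

theorem mem_prependGap {i : ℕ} : i ∈ prependGap k S' ↔ i = 0 ∨ ∃ s ∈ S', s + (k + 1) = i := by
  simp [prependGap]

theorem add_mem_prependGap_iff {i : ℕ} : i + (k + 1) ∈ prependGap k S' ↔ i ∈ S' := by
  simp [prependGap]

theorem prod_prependGap {M : Type*} [CommMonoid M] (G : ℕ → M) :
    ∏ s ∈ prependGap k S', G s = G 0 * ∏ s ∈ S', G (s + (k + 1)) := by
  rw [prependGap, prod_insert (by simp), prod_image (fun _ _ _ _ h => by omega)]

theorem prependGap_inj {k' : ℕ} {S'' : Finset ℕ} (h0 : 0 ∈ S') (h0' : 0 ∈ S'') :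
    prependGap k S' = prependGap k' S'' ↔ k = k' ∧ S' = S'' := by
  refine ⟨fun h => ?_, fun ⟨hk, hS⟩ => hk ▸ hS ▸ rfl⟩
  have le_of_mem {k k' : ℕ} {S' S'' : Finset ℕ} (h0 : 0 ∈ S')
      (h : prependGap k S' = prependGap k' S'') : k' ≤ k := by
    have := h ▸ (add_mem_prependGap_iff.2 h0 : 0 + (k + 1) ∈ prependGap k S')
    obtain h | ⟨s, -, hs⟩ := mem_prependGap.1 this <;> omega
  obtain rfl : k = k' := le_antisymm (le_of_mem h0' h.symm) (le_of_mem h0 h)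
  exact ⟨rfl, ext fun i => by rw [← add_mem_prependGap_iff, h, add_mem_prependGap_iff]⟩

theorem prependGap_mem_iff {n : ℕ} (h0 : 0 ∈ S') :
    prependGap k S' ∈ (subsetsWithZero (n + 1)).erase {0} ↔
      k < n ∧ S' ∈ subsetsWithZero (n - k) := by
  have hk : k + 1 ∈ prependGap k S' := by simpa using add_mem_prependGap_iff.2 h0
  simp only [mem_erase, mem_subsetsWithZero, subset_iff, mem_range, h0, and_true]
  constructor
  · rintro ⟨-, hsub, -⟩
    refine ⟨by have := hsub hk; omega, fun s hs => ?_⟩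
    have := hsub (add_mem_prependGap_iff.2 hs)
    omega
  · rintro ⟨hkn, hsub⟩
    refine ⟨fun h => by simp [h] at hk, fun i hi => ?_, by simp [prependGap]⟩
    obtain rfl | ⟨s, hs, rfl⟩ := mem_prependGap.1 hi
    · omega
    · have := hsub hs
      omega

theorem exists_prependGap_eq {S : Finset ℕ} (h0 : 0 ∈ S) (hS : S ≠ {0}) :
    ∃ k S', 0 ∈ S' ∧ prependGap k S' = S := by
  have hne : (S.erase 0).Nonempty := by
    rw [nonempty_iff_ne_empty, Ne, erase_eq_empty_iff]
    exact not_or.2 ⟨ne_empty_of_mem h0, hS⟩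
  set m := (S.erase 0).min' hne
  have hm : m ∈ S.erase 0 := min'_mem _ _
  have hm0 : m ≠ 0 := (mem_erase.1 hm).1
  refine ⟨m - 1, (S.erase 0).image (· - m), mem_image.2 ⟨m, hm, Nat.sub_self m⟩, ?_⟩
  ext i
  rw [mem_prependGap]
  constructor
  · rintro (rfl | ⟨s, hs, rfl⟩)
    · exact h0
    · obtain ⟨j, hj, rfl⟩ := mem_image.1 hs
      have := min'_le _ j hj
      rw [show j - m + (m - 1 + 1) = j by omega]
      exact (mem_erase.1 hj).2
  · intro hi
    rcases Nat.eq_zero_or_pos i with rfl | hi0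
    · exact Or.inl rfl
    · have hi' : i ∈ S.erase 0 := mem_erase.2 ⟨hi0.ne', hi⟩
      have := min'_le _ i hi'
      exact Or.inr ⟨i - m, mem_image.2 ⟨i, hi', rfl⟩, by omega⟩

/-- Every set of positions containing `0`, other than `{0}`, is `prependGap k S'` for a unique
length `k` of its first gap and a unique remainder `S'`. -/
theorem sum_erase_singleton_eq_sum_prependGap {M : Type*} [AddCommMonoid M] (n : ℕ)
    (F : Finset ℕ → M) :
    ∑ S ∈ (subsetsWithZero (n + 1)).erase {0}, F S =
      ∑ k ∈ range n, ∑ S' ∈ subsetsWithZero (n - k), F (prependGap k S') := by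
  rw [sum_sigma']
  symm
  refine sum_bij (fun x _ => prependGap x.1 x.2) (fun x hx => ?_) (fun ⟨k, S'⟩ hx ⟨k', S''⟩ hy h => ?_)
    (fun S hS => ?_) (fun _ _ => rfl)
  · rw [mem_sigma, mem_range] at hx
    exact (prependGap_mem_iff (mem_subsetsWithZero.1 hx.2).2).2 hx
  · rw [mem_sigma, mem_subsetsWithZero] at hx hy
    obtain ⟨rfl, rfl⟩ := (prependGap_inj hx.2.2 hy.2.2).1 h
    rfl
  · obtain ⟨hS1, hS⟩ := mem_erase.1 hS
    obtain ⟨k, S', h0, rfl⟩ := exists_prependGap_eq (mem_subsetsWithZero.1 hS).2 hS1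
    have := (prependGap_mem_iff h0).1 (mem_erase.2 ⟨hS1, hS⟩)
    exact ⟨⟨k, S'⟩, mem_sigma.2 ⟨mem_range.2 this.1, this.2⟩, rfl⟩

variable (a : ℕ+) (v : Word)

theorem subword_cons_prependGap :
    subword (a :: v) (prependGap k S') = a :: subword (v.drop k) S' := by
  rw [subword_eq_filterPos, List.filterPos_cons, if_pos (by simp [prependGap]),
    subword_eq_filterPos, List.filterPos_eq_filterPos_drop (k := k)]
  · simp only [Nat.add_assoc, add_mem_prependGap_iff]
    rfl
  · intro i hi
    simp only [decide_eq_false_iff_not, mem_prependGap]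
    rintro (h | ⟨s, -, h⟩) <;> omega

theorem gapAfter_cons_prependGap_zero (h0 : 0 ∈ S') :
    gapAfter (a :: v) (prependGap k S') 0 = v.take k := by
  rw [gapAfter_eq_filterPos, List.filterPos_cons, if_neg (by simp), List.nil_append,
    ← List.filterPos_lt]
  congr
  funext i
  rw [decide_eq_decide]
  constructor
  · rintro ⟨-, h⟩
    have := h (0 + (k + 1)) (add_mem_prependGap_iff.2 h0)
    omega
  · intro h
    refine ⟨by omega, fun j hj => ?_⟩
    rcases mem_prependGap.1 hj with h' | ⟨s, -, h'⟩ <;> omega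

theorem gapAfter_cons_prependGap_add (s : ℕ) :
    gapAfter (a :: v) (prependGap k S') (s + (k + 1)) = gapAfter (v.drop k) S' s := by
  rw [gapAfter_eq_filterPos, List.filterPos_cons, if_neg (by simp), List.nil_append,
    List.filterPos_eq_filterPos_drop (k := k), gapAfter_eq_filterPos]
  · congr
    funext i
    rw [decide_eq_decide]
    constructor
    · rintro ⟨h, hall⟩
      refine ⟨by omega, fun j hj => ?_⟩
      have := hall (j + (k + 1)) (add_mem_prependGap_iff.2 hj)
      omega
    · rintro ⟨h, hall⟩
      refine ⟨by omega, fun j hj => ?_⟩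
      rcases mem_prependGap.1 hj with h' | ⟨t, ht, rfl⟩
      · omega
      · have := hall t ht
        omega
  · intro i hi
    simp only [decide_eq_false_iff_not]
    omega

end PrependGap

section Series

variable [CommRing A]

def leftQuot (a : ℕ+) (p : Word → A) : Word → A := fun u => p (a :: u)

theorem cauchy_nil (p q : Word → A) : cauchy p q [] = p [] * q [] := by
  simp [cauchy]

theorem cauchy_cons (p q : Word → A) (a : ℕ+) (v : Word) :
    cauchy p q (a :: v) = p [] * q (a :: v) + cauchy (leftQuot a p) q v := by
  rw [cauchy, List.length_cons, sum_range_succ', add_comm]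
  rfl

theorem leftQuot_cauchy (p q : Word → A) (a : ℕ+) :
    leftQuot a (cauchy p q) = p [] • leftQuot a q + cauchy (leftQuot a p) q :=
  funext (cauchy_cons p q a)

theorem cauchy_add_left (p p' q : Word → A) : cauchy (p + p') q = cauchy p q + cauchy p' q := by
  funext w
  simp [cauchy, add_mul, sum_add_distrib]

theorem cauchy_smul_left (c : A) (p q : Word → A) : cauchy (c • p) q = c • cauchy p q := by
  funext w
  simp [cauchy, mul_sum, mul_assoc]

theorem cauchy_add_right (p q q' : Word → A) : cauchy p (q + q') = cauchy p q + cauchy p q' := by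
  funext w
  simp [cauchy, mul_add, sum_add_distrib]

theorem cauchy_smul_right (c : A) (p q : Word → A) : cauchy p (c • q) = c • cauchy p q := by
  funext w
  simp [cauchy, mul_sum, mul_left_comm]

theorem cauchy_congr_right {p q q' : Word → A} {v : Word}
    (h : ∀ u : Word, u.length ≤ v.length → q u = q' u) : cauchy p q v = cauchy p q' v :=
  sum_congr rfl fun k _ => by rw [h (v.drop k) (by simp)]

theorem cauchy_assoc (p q r : Word → A) : cauchy (cauchy p q) r = cauchy p (cauchy q r) := by
  funext w
  induction w generalizing p with
  | nil => simp only [cauchy_nil, mul_assoc]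
  | cons a v ih =>
    rw [cauchy_cons, leftQuot_cauchy, cauchy_add_left, cauchy_smul_left, Pi.add_apply,
      Pi.smul_apply, smul_eq_mul, ih, cauchy_cons p, cauchy_cons q, cauchy_nil]
    ring

theorem cauchy_one_left (q : Word → A) : cauchy one q = q := by
  funext w
  cases w with
  | nil => simp [cauchy_nil, one]
  | cons a v =>
    rw [cauchy_cons, show leftQuot a (one : Word → A) = 0 from funext fun _ => by simp [leftQuot, one]]
    simp [cauchy, one]

theorem subst_nil (f g : Word → A) : subst f g [] = f [] := rfl

theorem subst_of_ne_nil (f g : Word → A) {w : Word} (hw : w ≠ []) :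
    subst f g w = ∑ S ∈ subsetsWithZero w.length, f (subword w S) * ∏ s ∈ S, g (gapAfter w S s) :=
  if_neg hw

theorem subst_cons (f g : Word → A) (a : ℕ+) (v : Word) :
    subst f g (a :: v) = cauchy g (subst (leftQuot a f) g) v := by
  have first_gap : ∀ k < v.length, g (v.take k) * subst (leftQuot a f) g (v.drop k) =
      ∑ S' ∈ subsetsWithZero (v.length - k), f (subword (a :: v) (prependGap k S')) *
        ∏ s ∈ prependGap k S', g (gapAfter (a :: v) (prependGap k S') s) := by
    intro k hk
    rw [subst_of_ne_nil _ _ (by simpa using hk), List.length_drop, mul_sum]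
    refine sum_congr rfl fun S' hS' => ?_
    rw [subword_cons_prependGap, prod_prependGap,
      gapAfter_cons_prependGap_zero _ _ (mem_subsetsWithZero.1 hS').2]
    simp only [gapAfter_cons_prependGap_add, leftQuot]
    ring
  have hsingleton : {0} ∈ subsetsWithZero (v.length + 1) := by simp [mem_subsetsWithZero]
  rw [subst_of_ne_nil _ _ (List.cons_ne_nil a v), List.length_cons, ← add_sum_erase _ _ hsingleton,
    sum_erase_singleton_eq_sum_prependGap, subword_cons_singleton_zero, prod_singleton,
    gapAfter_cons_singleton_zero, cauchy, sum_range_succ, List.take_length, List.drop_length,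
    sum_congr rfl fun k hk => (first_gap k (mem_range.1 hk)).symm, subst_nil, leftQuot, add_comm,
    mul_comm]

theorem leftQuot_subst (f g : Word → A) (a : ℕ+) :
    leftQuot a (subst f g) = cauchy g (subst (leftQuot a f) g) :=
  funext (subst_cons f g a)

theorem subst_add (p q g : Word → A) : subst (p + q) g = subst p g + subst q g := by
  funext w
  by_cases hw : w = []
  · subst hw; rfl
  · simp [subst_of_ne_nil _ _ hw, add_mul, sum_add_distrib]

theorem subst_smul (c : A) (p g : Word → A) : subst (c • p) g = c • subst p g := by
  funext w
  by_cases hw : w = []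
  · subst hw; rfl
  · simp [subst_of_ne_nil _ _ hw, mul_sum, mul_assoc]

theorem subst_one_right (f : Word → A) : subst f one = f := by
  funext w
  induction w generalizing f with
  | nil => rfl
  | cons a v ih => rw [subst_cons, cauchy_one_left, ih]; rfl

theorem subst_cauchy_apply (p q r : Word → A) :
    ∀ w, subst (cauchy p q) r w = cauchy (subst p r) (subst q r) w
  | [] => by simp only [subst_nil, cauchy_nil]
  | a :: v => by
    calc subst (cauchy p q) r (a :: v)
        = cauchy r (p [] • subst (leftQuot a q) r + subst (cauchy (leftQuot a p) q) r) v := by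
          rw [subst_cons, leftQuot_cauchy, subst_add, subst_smul]
      _ = p [] * cauchy r (subst (leftQuot a q) r) v +
            cauchy r (cauchy (subst (leftQuot a p) r) (subst q r)) v := by
          rw [cauchy_add_right, cauchy_smul_right, Pi.add_apply, Pi.smul_apply, smul_eq_mul,
            cauchy_congr_right fun u _ => subst_cauchy_apply (leftQuot a p) q r u]
      _ = cauchy (subst p r) (subst q r) (a :: v) := by
          rw [cauchy_cons, subst_nil, leftQuot_subst, cauchy_assoc, subst_cons q]
termination_by w => w.length

theorem subst_cauchy (p q r : Word → A) :
    subst (cauchy p q) r = cauchy (subst p r) (subst q r) :=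
  funext (subst_cauchy_apply p q r)

theorem subst_subst_apply (p q r : Word → A) : ∀ w, subst (subst p q) r w = subst p (bullet q r) w
  | [] => rfl
  | a :: v => by
    calc subst (subst p q) r (a :: v)
        = cauchy r (cauchy (subst q r) (subst (subst (leftQuot a p) q) r)) v := by
          rw [subst_cons, leftQuot_subst, subst_cauchy]
      _ = cauchy r (cauchy (subst q r) (subst (leftQuot a p) (bullet q r))) v :=
          cauchy_congr_right fun u hu =>
            cauchy_congr_right fun u' hu' => subst_subst_apply (leftQuot a p) q r u'
      _ = subst p (bullet q r) (a :: v) := by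
          rw [← cauchy_assoc, subst_cons]
          rfl
termination_by w => w.length

theorem subst_subst (p q r : Word → A) : subst (subst p q) r = subst p (bullet q r) :=
  funext (subst_subst_apply p q r)

theorem bullet_nil (f g : Word → A) : bullet f g [] = g [] * f [] :=
  cauchy_nil g (subst f g)

theorem bullet_assoc (p q r : Word → A) : bullet (bullet p q) r = bullet p (bullet q r) := by
  rw [bullet, bullet, subst_cauchy, subst_subst, ← cauchy_assoc]
  rfl

theorem bullet_one_right (f : Word → A) : bullet f one = f := by
  rw [bullet, subst_one_right, cauchy_one_left]

end Series

section RightInverse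

variable [CommRing A]

/-- Solves `(f • g)(w) = 0` for `g w`, which occurs in that coefficient only through the term
`g w * f []`; all other terms involve `g` on shorter words only. -/
def rightInv (f : Word → A) (w : Word) : A :=
  if w = [] then 1 else
    -∑ k : Fin w.length, rightInv f (w.take k) *
      ∑ S ∈ subsetsWithZero (w.drop k).length,
        f (subword (w.drop k) S) * ∏ s ∈ S, rightInv f (gapAfter (w.drop k) S s)
termination_by w.length
decreasing_by
  · simp only [List.length_take]
    omega
  · have := length_gapAfter_lt (w := w.drop k) (by simp) S s
    simp only [List.length_drop] at this
    omega

theorem rightInv_nil (f : Word → A) : rightInv f [] = 1 := by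
  rw [rightInv, if_pos rfl]

theorem rightInv_of_ne_nil (f : Word → A) {w : Word} (hw : w ≠ []) :
    rightInv f w =
      -∑ k ∈ range w.length, rightInv f (w.take k) * subst f (rightInv f) (w.drop k) := by
  rw [rightInv, if_neg hw, ← Fin.sum_univ_eq_sum_range]
  congr! 2 with k
  rw [subst_of_ne_nil _ _ (by simp)]

theorem bullet_rightInv {f : Word → A} (hf : f [] = 1) : bullet f (rightInv f) = one := by
  funext w
  by_cases hw : w = []
  · subst hw
    rw [bullet_nil, rightInv_nil, hf, one, if_pos rfl, one_mul]
  · rw [bullet, cauchy, sum_range_succ, List.take_length, List.drop_length, subst_nil, hf,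
      mul_one, one, if_neg hw, rightInv_of_ne_nil f hw, add_neg_cancel]

end RightInverse

def G1 (A : Type*) [CommRing A] : Type _ := {f : Word → A // f [] = 1}

namespace G1

variable [CommRing A]

instance : Mul (G1 A) := ⟨fun f g => ⟨bullet f.1 g.1, by rw [bullet_nil, f.2, g.2, one_mul]⟩⟩

instance : One (G1 A) := ⟨⟨one, rfl⟩⟩

instance : Inv (G1 A) := ⟨fun f => ⟨rightInv f.1, rightInv_nil f.1⟩⟩

instance : Group (G1 A) :=
  Group.ofRightAxioms
    (fun p q r => Subtype.ext (bullet_assoc p.1 q.1 r.1))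
    (fun f => Subtype.ext (bullet_one_right f.1))
    (fun f => Subtype.ext (bullet_rightInv f.2))

end G1

/-- `(G^1, •)` is a group with unit the constant series `1`: every
`f ∈ G^1` has a unique two-sided `•`-inverse in `G^1`. -/
theorem stmt2 [CommRing A] (f : Word → A) (hf : f [] = 1) :
    ∃! g : Word → A, g [] = 1 ∧ bullet g f = one ∧ bullet f g = one := by
  let u : G1 A := ⟨f, hf⟩
  refine ⟨(u⁻¹).1, ⟨(u⁻¹).2, congrArg Subtype.val (inv_mul_cancel u),
    congrArg Subtype.val (mul_inv_cancel u)⟩, ?_⟩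
  rintro g ⟨hg, hgf, -⟩
  let v : G1 A := ⟨g, hg⟩
  exact congrArg Subtype.val (eq_inv_of_mul_eq_one_left (a := v) (b := u) (Subtype.ext hgf))
end

section
/- Let m ∈ G^1 and let b ∈ G^0 be the unique series satisfying m = 1 + b·m (Cauchy product); b is the multivariate generating series of Boolean cumulants of m. Then b = 1 − m^{•−1}(x m(x)), where m^{•−1} is the inverse of m in the group (G^1, •) and m^{•−1}(x m(x)) denotes the shifted substitution of m into m^{•−1}. -/
variable {A : Type*}

/-!
Unfolding `•`, the identity `m⁻¹ • m = 1` says `m · m⁻¹(x m(x)) = 1`: the shifted substitution is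
a right inverse of `m` for the Cauchy product. The defining relation `m = 1 + b·m` says that
`1 - b` is a left inverse of `m`. The Cauchy product is associative with unit `1`, so the two
inverses coincide.
-/

section Cauchy

variable [CommRing A]

theorem one_apply_of_ne_nil {w : Word} (hw : w ≠ []) : (one : Word → A) w = 0 := if_neg hw

theorem cauchy_assoc_s13 (f g h : Word → A) : cauchy (cauchy f g) h = cauchy f (cauchy g h) := by
  funext w
  unfold cauchy
  set n := w.length
  have inner : ∀ k ∈ Finset.range (n + 1),
      (∑ j ∈ Finset.range ((w.take k).length + 1),
          f ((w.take k).take j) * g ((w.take k).drop j)) * h (w.drop k)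
      = ∑ j ∈ Finset.range (k + 1),
          f (w.take j) * (g ((w.drop j).take (k - j)) * h (w.drop k)) := by
    intro k hk
    rw [Finset.mem_range, Nat.lt_succ_iff] at hk
    rw [List.length_take, Nat.min_eq_left hk, Finset.sum_mul]
    refine Finset.sum_congr rfl fun j hj => ?_
    rw [Finset.mem_range, Nat.lt_succ_iff] at hj
    rw [List.take_take, Nat.min_eq_left hj, List.drop_take, mul_assoc]
  rw [Finset.sum_congr rfl inner]
  conv_lhs => simp only [Finset.range_eq_Ico]
  rw [← Finset.sum_Ico_Ico_comm]
  refine Finset.sum_congr (Finset.range_eq_Ico _).symm fun j hj => ?_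
  rw [Finset.mem_range] at hj
  rw [Finset.sum_Ico_eq_sum_range, List.length_drop, Finset.mul_sum,
    show n + 1 - j = n - j + 1 by omega]
  refine Finset.sum_congr rfl fun l _ => ?_
  rw [Nat.add_sub_cancel_left, List.drop_drop]

theorem one_cauchy (f : Word → A) : cauchy one f = f := by
  funext w
  rw [cauchy, Finset.sum_eq_single 0]
  · simp [one]
  · intro k hk hk0
    rw [Finset.mem_range, Nat.lt_succ_iff] at hk
    rw [one_apply_of_ne_nil, zero_mul]
    rw [Ne, List.take_eq_nil_iff, List.eq_nil_iff_length_eq_zero]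
    omega
  · simp

theorem cauchy_one (f : Word → A) : cauchy f one = f := by
  funext w
  rw [cauchy, Finset.sum_eq_single w.length]
  · simp [one]
  · intro k hk hk0
    rw [Finset.mem_range, Nat.lt_succ_iff] at hk
    rw [one_apply_of_ne_nil, mul_zero]
    rw [Ne, List.drop_eq_nil_iff]
    omega
  · simp

theorem sub_cauchy (f g h : Word → A) : cauchy (f - g) h = cauchy f h - cauchy g h := by
  funext w
  simp only [cauchy, Pi.sub_apply, sub_mul, Finset.sum_sub_distrib]

theorem eq_of_cauchy_eq_one {l f r : Word → A} (hl : cauchy l f = one) (hr : cauchy f r = one) :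
    l = r :=
  calc l = cauchy l (cauchy f r) := by rw [hr, cauchy_one]
    _ = r := by rw [← cauchy_assoc_s13, hl, one_cauchy]

end Cauchy

theorem stmt13_general [Field A] (m b minv : Word → A)
    (hbc : ∀ w, m w = one w + cauchy b m w)
    (hinv₁ : bullet minv m = one) :
    ∀ w, b w = one w - subst minv m w := by
  have left_inv : cauchy (one - b) m = one := by
    rw [sub_cauchy, one_cauchy]
    funext w
    rw [Pi.sub_apply, hbc w, add_sub_cancel_right]
  have right_inv : cauchy m (subst minv m) = one := hinv₁
  intro w
  rw [← eq_of_cauchy_eq_one left_inv right_inv, Pi.sub_apply, sub_sub_cancel]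

/-- let `b ∈ G^0` be the Boolean cumulant series of `m ∈ G^1`, i.e., the unique
series with `m = 1 + b·m` (Cauchy product), and let `m⁻¹` be the `•`-inverse of `m` in the
group `(G^1, •)`.  Then `b = 1 − m⁻¹(x m(x))`, where `m⁻¹(x m(x))` is the shifted
substitution of `m` into `m⁻¹`. -/
theorem stmt13 [Field A] [CharZero A] (m b minv : Word → A)
    (hm : m [] = 1) (hb : b [] = 0) (hbc : ∀ w, m w = one w + cauchy b m w)
    (hminv : minv [] = 1) (hinv₁ : bullet minv m = one) (hinv₂ : bullet m minv = one) :
    ∀ w, b w = one w - subst minv m w :=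
  stmt13_general m b minv hbc hinv₁
end
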